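/- In the group algebra kQ_{4t} over a field of characteristic 2, with a = g+1, b = h+1, c = hg+1 and N the norm element, one has N = c a^{2t-2} b = c a^{2t-1} and N = a^{2t-1} + a^{2t-2}b + c a^{2t-2}. -/

import Mathlib

/-!
Because `2t` is a power of `2` and the characteristic is `2`, `a ^ (2t-1) = (g + 1) ^ (2t-1)` is
the geometric sum `∑_{i < 2t} gⁱ`, i.e. the sum over `⟨g⟩`, so `N = a ^ (2t-1) + h a ^ (2t-1)`;
likewise `a ^ (2t) = g ^ (2t) + 1 = 0`. Hence `g` fixes `a ^ (2t-1)` and `g²` fixes `a ^ (2t-2)`.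
Conjugation by `h` inverts `g`, so it sends `a ^ (2t-2)` to `g ^ (2-2t) a ^ (2t-2) = a ^ (2t-2)`.
Each identity is then a short computation, the first one also using `hgh·g = h² = g ^ t` with
`t` even.
-/

open Finset MonoidAlgebra QuaternionGroup

theorem pow_sub_one_eq_mul_pow_sub_two {M : Type*} [Monoid M] (x : M) {n : ℕ} (hn : 2 ≤ n) :
    x ^ (n - 1) = x * x ^ (n - 2) := by
  rw [← pow_succ']
  congr 1
  omega

theorem ZMod.sum_univ_eq_sum_range {M : Type*} [AddCommMonoid M] (n : ℕ) [NeZero n]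
    (f : ZMod n → M) : ∑ x : ZMod n, f x = ∑ i ∈ range n, f i := by
  obtain ⟨k, rfl⟩ := Nat.exists_eq_succ_of_ne_zero (NeZero.ne n)
  rw [← Fin.sum_univ_eq_sum_range]
  exact Fintype.sum_congr _ _ fun i => congrArg f (Fin.cast_val_eq_self i).symm

section CharTwo

variable {R : Type*} [Ring R] [CharP R 2]

theorem mul_eq_self_of_add_one_mul_eq_zero {x y : R} (h : (x + 1) * y = 0) : x * y = y := by
  rwa [add_mul, one_mul, CharTwo.add_eq_zero] at h

theorem add_one_pow_two_pow (x : R) (n : ℕ) : (x + 1) ^ 2 ^ n = x ^ 2 ^ n + 1 := by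
  simpa using add_pow_char_pow_of_commute 2 n (Commute.one_right x)

theorem add_one_pow_two_pow_sub_one (x : R) (n : ℕ) :
    (x + 1) ^ (2 ^ n - 1) = ∑ i ∈ range (2 ^ n), x ^ i := by
  induction n with
  | zero => simp
  | succ n ih =>
    have hexp : 2 ^ (n + 1) - 1 = (2 ^ n - 1) + 2 ^ n := by
      have := Nat.one_le_two_pow (n := n)
      rw [pow_succ]
      omega
    rw [hexp, pow_add, ih, add_one_pow_two_pow, pow_succ, mul_two, sum_range_add, mul_add,
      mul_one, sum_mul, add_comm]
    simp_rw [← pow_add, add_comm]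

end CharTwo

section QuaternionRelations

variable {R : Type*} [Ring R] [CharP R 2] {g h : R} {n t : ℕ}

theorem mul_add_one_pow_sub_one (hnil : (g + 1) ^ n = 0) (hn : n ≠ 0) :
    g * (g + 1) ^ (n - 1) = (g + 1) ^ (n - 1) := by
  apply mul_eq_self_of_add_one_mul_eq_zero
  rwa [← pow_succ', Nat.sub_add_cancel (Nat.one_le_iff_ne_zero.mpr hn)]

theorem pow_mul_add_one_pow_sub_two (hnil : (g + 1) ^ n = 0) (hn : 2 ≤ n) {j : ℕ}
    (hj : Even j) : g ^ j * (g + 1) ^ (n - 2) = (g + 1) ^ (n - 2) := by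
  have hsq : g ^ 2 * (g + 1) ^ (n - 2) = (g + 1) ^ (n - 2) := by
    apply mul_eq_self_of_add_one_mul_eq_zero
    rw [← pow_one 2, ← add_one_pow_two_pow, ← pow_add, pow_one, Nat.add_sub_cancel' hn, hnil]
  obtain ⟨i, rfl⟩ := hj
  induction i with
  | zero => simp
  | succ i ih => rw [show i + 1 + (i + 1) = 2 + (i + i) by ring, pow_add, mul_assoc, ih, hsq]

theorem commute_add_one_pow_sub_two (hg : g ^ (2 * t) = 1) (hnil : (g + 1) ^ (2 * t) = 0)
    (hrel : g * h * g = h) (ht : t ≠ 0) : Commute ((g + 1) ^ (2 * t - 2)) h := by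
  set u := g ^ (2 * t - 1)
  have hcomm : Commute g u := Commute.self_pow g _
  have hgu : g * u = 1 := by rw [← pow_succ', Nat.sub_add_cancel (by omega), hg]
  have hug : u * g = 1 := hcomm.eq ▸ hgu
  have hgh : g * h = h * u := by
    calc g * h = g * h * (g * u) := by rw [hgu, mul_one]
      _ = h * u := by rw [← mul_assoc, hrel]
  have hconj : SemiconjBy h (u * (g + 1)) (g + 1) := by
    rw [SemiconjBy, mul_add, mul_one, ← hcomm.eq, hgu, add_mul, one_mul, hgh, mul_add, mul_one,
      add_comm]
  -- `u = g⁻¹`, and `g ^ (2t-2)` fixes `(g + 1) ^ (2t-2)`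
  have hpow : (u * (g + 1)) ^ (2 * t - 2) = (g + 1) ^ (2 * t - 2) := by
    calc (u * (g + 1)) ^ (2 * t - 2) = u ^ (2 * t - 2) * (g + 1) ^ (2 * t - 2) :=
          (hcomm.symm.add_right (Commute.one_right u)).mul_pow _
      _ = u ^ (2 * t - 2) * (g ^ (2 * t - 2) * (g + 1) ^ (2 * t - 2)) := by
          rw [pow_mul_add_one_pow_sub_two hnil (by omega) ⟨t - 1, by omega⟩]
      _ = (g + 1) ^ (2 * t - 2) := by
          rw [← mul_assoc, ← hcomm.symm.mul_pow, hug, one_pow, one_mul]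
  have hconj_pow := hconj.pow_right (2 * t - 2)
  rw [hpow] at hconj_pow
  exact hconj_pow.symm

theorem mul_add_one_mul_add_one_pow_sub_one (hnil : (g + 1) ^ n = 0) (hn : n ≠ 0) :
    (h * g + 1) * (g + 1) ^ (n - 1) = (g + 1) ^ (n - 1) + h * (g + 1) ^ (n - 1) := by
  rw [add_mul, one_mul, mul_assoc, mul_add_one_pow_sub_one hnil hn, add_comm]

theorem add_one_pow_sub_two_mul_add_mul_add_one_pow_sub_two
    (hPh : Commute ((g + 1) ^ (n - 2)) h) (hn : 2 ≤ n) :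
    (g + 1) ^ (n - 2) * (h + 1) + (h * g + 1) * (g + 1) ^ (n - 2) = h * (g + 1) ^ (n - 1) := by
  calc (g + 1) ^ (n - 2) * (h + 1) + (h * g + 1) * (g + 1) ^ (n - 2)
      = h * ((g + 1) * (g + 1) ^ (n - 2)) + ((g + 1) ^ (n - 2) + (g + 1) ^ (n - 2)) := by
        rw [mul_add, hPh.eq]
        noncomm_ring
    _ = h * (g + 1) ^ (n - 1) := by
        rw [CharTwo.add_self_eq_zero, add_zero, pow_sub_one_eq_mul_pow_sub_two _ hn]

theorem mul_add_one_pow_sub_two_mul_add_one (hg : g ^ (2 * t) = 1)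
    (hnil : (g + 1) ^ (2 * t) = 0) (hrel : g * h * g = h) (hh : h ^ 2 = g ^ t) (ht : Even t)
    (ht0 : t ≠ 0) :
    (h * g + 1) * (g + 1) ^ (2 * t - 2) * (h + 1) =
      (g + 1) ^ (2 * t - 1) + h * (g + 1) ^ (2 * t - 1) := by
  set P := (g + 1) ^ (2 * t - 2)
  have hPh : Commute P h := commute_add_one_pow_sub_two hg hnil hrel ht0
  have hPg : Commute P g := ((Commute.refl g).add_left (Commute.one_left g)).pow_left _
  have hg2 : g * (g * P) = P := by
    rw [← mul_assoc, ← sq, pow_mul_add_one_pow_sub_two hnil (by omega) even_two]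
  have hgt : g ^ t * P = P := pow_mul_add_one_pow_sub_two hnil (by omega) ht
  have hhgh : h * g * h * P = g * P := by
    calc h * g * h * P = h * g * h * (g * (g * P)) := by rw [hg2]
      _ = h * (g * h * g) * (g * P) := by simp only [mul_assoc]
      _ = g ^ t * (g * P) := by rw [hrel, ← sq, hh]
      _ = g * (g ^ t * P) := by rw [← mul_assoc, ← pow_succ, pow_succ', mul_assoc]
      _ = g * P := by rw [hgt]
  have hswap : (h * g + 1) * P * h = (h * g + 1) * P * g := by
    calc (h * g + 1) * P * h = h * g * h * P + h * P := by
          rw [mul_assoc, hPh.eq]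
          noncomm_ring
      _ = h * (g * (g * P)) + g * P := by rw [hhgh, hg2, add_comm]
      _ = (h * g + 1) * P * g := by
          rw [mul_assoc, hPg.eq]
          noncomm_ring
  calc (h * g + 1) * P * (h + 1) = (h * g + 1) * P * (g + 1) := by
        rw [mul_add, hswap, ← mul_add]
    _ = (h * g + 1) * (g + 1) ^ (2 * t - 1) := by
        rw [mul_assoc, ← pow_succ]
        congr 2
        omega
    _ = _ := mul_add_one_mul_add_one_pow_sub_one hnil (by omega)

end QuaternionRelations

namespace QuaternionGroup

variable {n : ℕ}

theorem a_mul_xa_mul_a (i j : ZMod (2 * n)) : a i * xa j * a i = xa j := by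
  simp [a_mul_xa, xa_mul_a]

theorem sum_eq_sum_range {M : Type*} [AddCommMonoid M] [NeZero n] (f : QuaternionGroup n → M) :
    ∑ x, f x = ∑ i ∈ range (2 * n), (f (a 1 ^ i) + f (xa 0 * a 1 ^ i)) := by
  let e : ZMod (2 * n) ⊕ ZMod (2 * n) ≃ QuaternionGroup n :=
    { toFun := Sum.elim a xa
      invFun := fun | a i => .inl i | xa i => .inr i
      left_inv := by rintro (i | i) <;> rfl
      right_inv := by rintro (i | i) <;> rfl }
  have hsum : ∑ x, f x = ∑ i : ZMod (2 * n), (f (a i) + f (xa i)) := by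
    rw [← e.sum_comp, Fintype.sum_sum_type, sum_add_distrib]
    rfl
  rw [hsum, ZMod.sum_univ_eq_sum_range]
  refine sum_congr rfl fun i _ => ?_
  rw [a_one_pow, xa_mul_a, zero_add]

end QuaternionGroup

/-- `N = c a^{2t-2} b = c a^{2t-1}` and
`N = a^{2t-1} + a^{2t-2} b + c a^{2t-2}` in `k Q_{4t}`. -/
theorem stmt_4 (k : Type*) [Field k] [CharP k 2] (t : ℕ) (ht : 2 ≤ t)
    (hpow : ∃ m : ℕ, t = 2 ^ m) [NeZero t]
    (g h : MonoidAlgebra k (QuaternionGroup t))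
    (hg : g = of k (QuaternionGroup t) (QuaternionGroup.a 1))
    (hh : h = of k (QuaternionGroup t) (QuaternionGroup.xa 0))
    (a b c N : MonoidAlgebra k (QuaternionGroup t))
    (ha : a = g + 1) (hb : b = h + 1) (hc : c = h * g + 1)
    (hN : N = ∑ j : QuaternionGroup t, of k (QuaternionGroup t) j) :
    N = c * a ^ (2 * t - 2) * b ∧ N = c * a ^ (2 * t - 1) ∧
      N = a ^ (2 * t - 1) + a ^ (2 * t - 2) * b + c * a ^ (2 * t - 2) := by
  obtain ⟨m, htm⟩ := hpow
  have h2t : 2 * t = 2 ^ (m + 1) := by rw [htm, pow_succ']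
  have : CharP (MonoidAlgebra k (QuaternionGroup t)) 2 := charP_of_injective_algebraMap' k 2
  subst ha hb hc hN
  have hg1 : g ^ (2 * t) = 1 := by rw [hg, ← map_pow, a_one_pow_n, map_one]
  have hnil : (g + 1) ^ (2 * t) = 0 := by
    rw [h2t, add_one_pow_two_pow, ← h2t, hg1, CharTwo.add_self_eq_zero]
  have hrel : g * h * g = h := by rw [hg, hh, ← map_mul, ← map_mul, a_mul_xa_mul_a]
  have hh2 : h ^ 2 = g ^ t := by rw [hg, hh, ← map_pow, ← map_pow, xa_sq, a_one_pow]
  have heven : Even t := htm ▸ (Nat.even_pow' (by rintro rfl; omega)).mpr even_two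
  have hgeom : (g + 1) ^ (2 * t - 1) = ∑ i ∈ range (2 * t), g ^ i := by
    rw [h2t]
    exact add_one_pow_two_pow_sub_one g (m + 1)
  have hnorm : ∑ j, of k _ j = (g + 1) ^ (2 * t - 1) + h * (g + 1) ^ (2 * t - 1) := by
    rw [sum_eq_sum_range, sum_add_distrib, hgeom, mul_sum, hg, hh]
    simp only [map_mul, map_pow]
  rw [hnorm]
  refine ⟨(mul_add_one_pow_sub_two_mul_add_one hg1 hnil hrel hh2 heven (by omega)).symm,
    (mul_add_one_mul_add_one_pow_sub_one hnil (by omega)).symm, ?_⟩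
  rw [add_assoc, add_one_pow_sub_two_mul_add_mul_add_one_pow_sub_two
    (commute_add_one_pow_sub_two hg1 hnil hrel (by omega)) (by omega)]
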